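/- (Proposition 1, eDT-I part.) Let α, β ∈ A₁, and assume the linear-problem data at p₁: p₁ ∈ A₀ is invertible with Dp₁ = 0; f₁, g₁ ∈ A₀ with f₁ invertible and σ₁ ∈ A₁ satisfy Df₁ = αg₁, Dg₁ = βf₁ + p₁σ₁, Dσ₁ = p₁g₁; set y₁ = g₁f₁⁻¹ and Ω₁ = σ₁f₁⁻¹. Define β₁ = p₁⁻¹Ω₁ and α₁ = −α_x(1 + αβ₁) + α((Dα)(Dβ₁) − p₁²). Then the second Bäcklund relation β₁,ₓ = β(1 − αβ₁) − β₁((Dα)(Dβ₁) − p₁²) holds automatically, and consequently W₁ := E₁(λ, p₁; α, β₁) satisfies (DW₁) + W₁†·L(λ; α, β) − L(λ; α₁, β₁)·W₁ = 0 identically in λ; i.e. Ψ ↦ W₁Ψ is a Darboux transformation of the linear problem DΨ = L(λ; α, β)Ψ. -/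

import Mathlib

/-!
With `y₁ = g₁f₁⁻¹`, the linear problem at `λ = p₁` becomes the Riccati system
`Dβ₁ = y₁ + β₁αy₁`, `Dy₁ = β + p₁²β₁ − y₁αy₁`; applying `D` to the first equation and
substituting the second gives the Bäcklund relation for `β₁`. Since `λ` is central, the Darboux
condition for `E₁` splits into one scalar identity per matrix entry. Each follows from the
Bäcklund relation and the definition of `α₁`, using that `αβ₁`, `Dα`, `Dβ₁`, `p₁` are even, hence
central, and that odd elements square to zero (so that `(1 + αβ₁)(1 − αβ₁) = 1`).
-/

open Polynomial Matrix

/-- A supercommutative superalgebra `A = A₀ ⊕ A₁` over `ℂ`. -/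
structure SuperAlgebra (A : Type*) [Ring A] [Algebra ℂ A] where
  A0 : Submodule ℂ A
  A1 : Submodule ℂ A
  isCompl : IsCompl A0 A1
  algebraMap_mem : ∀ c : ℂ, algebraMap ℂ A c ∈ A0
  mul_mem00 : ∀ {a b : A}, a ∈ A0 → b ∈ A0 → a * b ∈ A0
  mul_mem01 : ∀ {a b : A}, a ∈ A0 → b ∈ A1 → a * b ∈ A1
  mul_mem10 : ∀ {a b : A}, a ∈ A1 → b ∈ A0 → a * b ∈ A1
  mul_mem11 : ∀ {a b : A}, a ∈ A1 → b ∈ A1 → a * b ∈ A0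
  even_comm : ∀ {a : A}, a ∈ A0 → ∀ b : A, a * b = b * a
  odd_anticomm : ∀ {a b : A}, a ∈ A1 → b ∈ A1 → a * b = -(b * a)

/-- An odd superderivation `D` on a superalgebra: `D(ab) = (Da)b + a†(Db)`. -/
structure OddDerivation {A : Type*} [Ring A] [Algebra ℂ A] (S : SuperAlgebra A) where
  D : A →ₗ[ℂ] A
  map_even : ∀ {a : A}, a ∈ S.A0 → D a ∈ S.A1
  map_odd : ∀ {a : A}, a ∈ S.A1 → D a ∈ S.A0
  leibniz_even : ∀ {a : A}, a ∈ S.A0 → ∀ b : A, D (a * b) = D a * b + a * D b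
  leibniz_odd : ∀ {a : A}, a ∈ S.A1 → ∀ b : A, D (a * b) = D a * b - a * D b

/-- An even (parity preserving) `ℂ`-linear derivation on a superalgebra. -/
structure EvenDerivation {A : Type*} [Ring A] [Algebra ℂ A] (S : SuperAlgebra A) where
  D : A →ₗ[ℂ] A
  map_even : ∀ {a : A}, a ∈ S.A0 → D a ∈ S.A0
  map_odd : ∀ {a : A}, a ∈ S.A1 → D a ∈ S.A1
  leibniz : ∀ a b : A, D (a * b) = D a * b + a * D b

/-- Apply a map coefficientwise to a polynomial (extension of a derivation to
polynomials in the central even indeterminate `λ = X`). -/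
noncomputable def cwise {A : Type*} [Ring A] (f : A → A) (P : Polynomial A) : Polynomial A :=
  P.sum fun n a => Polynomial.monomial n (f a)

/-- The entrywise super-parity involution `M ↦ M†` for `3 × 3` matrices having the
standard parity pattern (even entries at `(1,1), (1,2), (2,1), (2,2), (3,3)`; odd entries
at `(1,3), (2,3), (3,1), (3,2)`): it negates exactly the odd positions. -/
def sdag {R : Type*} [Ring R] (M : Matrix (Fin 3) (Fin 3) R) : Matrix (Fin 3) (Fin 3) R :=
  Matrix.of fun i j => if (i = 2 ∧ j ≠ 2) ∨ (i ≠ 2 ∧ j = 2) then -M i j else M i j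

/-- The SUSY AKNS spectral matrix `L(λ; α, β)`, with rows `[0, α, 0], [β, 0, λ], [0, λ, 0]`. -/
def Lgen {R : Type*} [Ring R] (lam a b : R) : Matrix (Fin 3) (Fin 3) R :=
  !![0, a, 0; b, 0, lam; 0, lam, 0]

/-- `L(λ; α, β)` with entries polynomial in the indeterminate `λ = X`. -/
noncomputable def Lpoly {A : Type*} [Ring A] (a b : A) : Matrix (Fin 3) (Fin 3) (Polynomial A) :=
  Lgen (X : Polynomial A) (C a) (C b)

/-- The elementary Darboux matrix `E₁(λ, p; a, b)` (the gauge matrix of eDT-I), with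
`da, db` standing for `Da, Db`. -/
def E1gen {R : Type*} [Ring R] (lam p a b da db : R) : Matrix (Fin 3) (Fin 3) R :=
  !![lam ^ 2 + (1 + a * b) * (da * db - p ^ 2), -da, lam * a;
     -db, 1 - a * b, 0;
     -(lam * b), 0, 1]

/-- The elementary Darboux matrix `E₂(λ, p; a, b)` (the gauge matrix of eDT-II). -/
def E2gen {R : Type*} [Ring R] (lam p a b da db : R) : Matrix (Fin 3) (Fin 3) R :=
  !![1 - a * b, da, -(lam * a);
     db, (1 + a * b) * (lam ^ 2 - p ^ 2 + da * db), -(lam * (a * db));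
     lam * b, lam * (b * da), lam ^ 2 * (1 + a * b) - p ^ 2]

/-- `E₁(λ, p; a, b)` with entries polynomial in `λ = X`. -/
noncomputable def E1poly {A : Type*} [Ring A] (D : A → A) (p a b : A) :
    Matrix (Fin 3) (Fin 3) (Polynomial A) :=
  E1gen (X : Polynomial A) (C p) (C a) (C b) (C (D a)) (C (D b))

/-- `E₂(λ, p; a, b)` with entries polynomial in `λ = X`. -/
noncomputable def E2poly {A : Type*} [Ring A] (D : A → A) (p a b : A) :
    Matrix (Fin 3) (Fin 3) (Polynomial A) :=
  E2gen (X : Polynomial A) (C p) (C a) (C b) (C (D a)) (C (D b))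

namespace SuperAlgebra

variable {A : Type*} [Ring A] [Algebra ℂ A] (S : SuperAlgebra A)

theorem one_mem_A0 : (1 : A) ∈ S.A0 := by
  simpa using S.algebraMap_mem 1

theorem mul_self_eq_zero_of_mem_A1 {x : A} (hx : x ∈ S.A1) : x * x = 0 := by
  have h : (2 : ℂ) • (x * x) = 0 := by
    rw [two_smul]
    nth_rewrite 1 [S.odd_anticomm hx hx]
    exact neg_add_cancel _
  exact ((isUnit_of_invertible (2 : ℂ)).smul_eq_zero).mp h

theorem mem_A0_of_mul_eq_one {u v : A} (hu : u ∈ S.A0) (huv : u * v = 1) (hvu : v * u = 1) :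
    v ∈ S.A0 := by
  obtain ⟨e, he, z, hz, rfl⟩ :=
    Submodule.mem_sup.mp (S.isCompl.sup_eq_top ▸ Submodule.mem_top : v ∈ S.A0 ⊔ S.A1)
  have huz : u * z ∈ S.A0 := by
    rw [show u * z = 1 - u * e by rw [← huv, mul_add, add_sub_cancel_left]]
    exact S.A0.sub_mem S.one_mem_A0 (S.mul_mem00 hu he)
  have huz0 : u * z = 0 := Submodule.disjoint_def.mp S.isCompl.disjoint _ huz (S.mul_mem01 hu hz)
  have hz0 : z = 0 := by rw [← one_mul z, ← hvu, mul_assoc, huz0, mul_zero]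
  rwa [hz0, add_zero]
theorem odd_mul_odd_mul_self_eq_zero {a b : A} (ha : a ∈ S.A1) (hb : b ∈ S.A1) :
    a * b * (a * b) = 0 := by
  linear_combination (norm := noncomm_ring) a * S.odd_anticomm ha hb * b
    - S.mul_self_eq_zero_of_mem_A1 ha * b * b

theorem darboux_entry₁₂ {a b e x : A} (ha : a ∈ S.A1) (hb : b ∈ S.A1) (he : e ∈ S.A0) :
    (-x * (1 + a * b) + a * e) * (1 - a * b) = (1 + a * b) * e * a - x := by
  have hab := S.even_comm (S.mul_mem11 ha hb)
  have hea : e * a = a * e := S.even_comm he a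
  have haa := S.mul_self_eq_zero_of_mem_A1 ha
  linear_combination (norm := noncomm_ring) x * S.odd_mul_odd_mul_self_eq_zero ha hb - hea
    - a * hea * b - haa * e * b - hab (e * a) - e * haa * b

theorem darboux_entry₂₁ {a b c e : A} (ha : a ∈ S.A1) (hb : b ∈ S.A1) :
    (1 - a * b) * c - b * ((1 + a * b) * e) = c * (1 - a * b) - b * e := by
  have hab := S.even_comm (S.mul_mem11 ha hb)
  linear_combination (norm := noncomm_ring) -hab c - a * S.mul_self_eq_zero_of_mem_A1 hb * e
    + hab b * e

end SuperAlgebra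

namespace OddDerivation

variable {A : Type*} [Ring A] [Algebra ℂ A] {S : SuperAlgebra A} (𝒟 : OddDerivation S)

theorem map_one : 𝒟.D 1 = 0 := by
  simpa using 𝒟.leibniz_even S.one_mem_A0 1

theorem map_inv_of_mul_eq_one {u v : A} (hu : u ∈ S.A0) (huv : u * v = 1) (hvu : v * u = 1) :
    𝒟.D v = -(v * 𝒟.D u * v) := by
  have h : 𝒟.D u * v + u * 𝒟.D v = 0 := by rw [← 𝒟.leibniz_even hu, huv, 𝒟.map_one]
  calc 𝒟.D v = v * (u * 𝒟.D v) := by rw [← mul_assoc, hvu, one_mul]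
    _ = -(v * 𝒟.D u * v) := by rw [eq_neg_of_add_eq_zero_right h, mul_neg, mul_assoc]

theorem map_β₁_of_linearProblem {α g σ finv p pinv y β₁ : A} (hσ : σ ∈ S.A1)
    (hpinv : pinv ∈ S.A0) (hDpinv : 𝒟.D pinv = 0) (hpinvp : pinv * p = 1)
    (hDσ : 𝒟.D σ = p * g) (hDfinv : 𝒟.D finv = -(finv * (α * g) * finv))
    (hy : y = g * finv) (hβ₁ : β₁ = pinv * (σ * finv)) :
    𝒟.D β₁ = y + β₁ * α * y := by
  rw [hβ₁, hy, 𝒟.leibniz_even hpinv, 𝒟.leibniz_odd hσ, hDpinv, hDσ, hDfinv]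
  linear_combination (norm := noncomm_ring) hpinvp * (g * finv)

theorem map_y_of_linearProblem {α β f g σ finv p pinv y β₁ : A} (hg : g ∈ S.A0)
    (hppinv : p * pinv = 1) (hffinv : f * finv = 1)
    (hDg : 𝒟.D g = β * f + p * σ) (hDfinv : 𝒟.D finv = -(finv * (α * g) * finv))
    (hy : y = g * finv) (hβ₁ : β₁ = pinv * (σ * finv)) :
    𝒟.D y = β + p ^ 2 * β₁ - y * α * y := by
  rw [hβ₁, hy, 𝒟.leibniz_even hg, hDg, hDfinv]
  linear_combination (norm := noncomm_ring) β * hffinv - p * hppinv * (σ * finv)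

theorem map_map_β₁_of_riccati {α β p y β₁ : A} (hα : α ∈ S.A1) (hβ₁ : β₁ ∈ S.A1)
    (hp : p ∈ S.A0) (hDβ₁ : 𝒟.D β₁ = y + β₁ * α * y)
    (hDy : 𝒟.D y = β + p ^ 2 * β₁ - y * α * y) :
    𝒟.D (𝒟.D β₁) = β * (1 - α * β₁) - β₁ * (𝒟.D α * 𝒟.D β₁ - p ^ 2) := by
  have hD2 : 𝒟.D (𝒟.D β₁) = 𝒟.D y + 𝒟.D β₁ * (α * y) - β₁ * (𝒟.D α * y - α * 𝒟.D y) := by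
    conv_lhs => rw [hDβ₁, map_add, mul_assoc, 𝒟.leibniz_odd hβ₁, 𝒟.leibniz_odd hα]
    abel
  have hp2 : p ^ 2 * β₁ = β₁ * p ^ 2 := (Commute.pow_left (S.even_comm hp β₁) 2).eq
  have hαβ₁ : α * β₁ * β = β * (α * β₁) := S.even_comm (S.mul_mem11 hα hβ₁) β
  have hDα : 𝒟.D α * β₁ = β₁ * 𝒟.D α := S.even_comm (𝒟.map_odd hα) β₁
  have hanti : α * β₁ = -(β₁ * α) := S.odd_anticomm hα hβ₁
  have hsq : β₁ * β₁ = 0 := S.mul_self_eq_zero_of_mem_A1 hβ₁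
  rw [hD2, hDy, hDβ₁]
  linear_combination (norm := noncomm_ring) hp2 + hanti * β - hαβ₁ + β₁ * α * hp2
    + hanti * β₁ * p ^ 2 - α * hsq * p ^ 2 + 𝒟.D α * hsq * α * y - hDα * β₁ * α * y

theorem darboux_entry₂₂ {a b : A} (ha : a ∈ S.A1) (hb : b ∈ S.A1) :
    𝒟.D (1 - a * b) = 𝒟.D b * a - b * 𝒟.D a := by
  rw [map_sub, 𝒟.map_one, 𝒟.leibniz_odd ha]
  linear_combination (norm := noncomm_ring) -S.even_comm (𝒟.map_odd ha) b
    - S.even_comm (𝒟.map_odd hb) a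

theorem map_mul_map_sub_sq_mem_A0 {a b p : A} (ha : a ∈ S.A1) (hb : b ∈ S.A1)
    (hp : p ∈ S.A0) : 𝒟.D a * 𝒟.D b - p ^ 2 ∈ S.A0 :=
  S.A0.sub_mem (S.mul_mem00 (𝒟.map_odd ha) (𝒟.map_odd hb)) (pow_two p ▸ S.mul_mem00 hp hp)

theorem darboux_entry₁₁ {a b c p : A} (ha : a ∈ S.A1) (hb : b ∈ S.A1) (hp : p ∈ S.A0)
    (hDp : 𝒟.D p = 0)
    (hDDb : 𝒟.D (𝒟.D b) = c * (1 - a * b) - b * (𝒟.D a * 𝒟.D b - p ^ 2)) :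
    𝒟.D ((1 + a * b) * (𝒟.D a * 𝒟.D b - p ^ 2)) =
      𝒟.D a * c - (-𝒟.D (𝒟.D a) * (1 + a * b) + a * (𝒟.D a * 𝒟.D b - p ^ 2)) * 𝒟.D b := by
  have hDa := 𝒟.map_odd ha
  have hDb := 𝒟.map_odd hb
  have hn : 1 + a * b ∈ S.A0 := S.A0.add_mem S.one_mem_A0 (S.mul_mem11 ha hb)
  have hDn : 𝒟.D (1 + a * b) = 𝒟.D a * b - a * 𝒟.D b := by
    rw [map_add, 𝒟.map_one, 𝒟.leibniz_odd ha, zero_add]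
  have hDe : 𝒟.D (𝒟.D a * 𝒟.D b - p ^ 2) = 𝒟.D (𝒟.D a) * 𝒟.D b + 𝒟.D a * 𝒟.D (𝒟.D b) := by
    rw [map_sub, 𝒟.leibniz_even hDa, pow_two, 𝒟.leibniz_even hp, hDp]
    simp
  have hab := S.even_comm (S.mul_mem11 ha hb)
  rw [𝒟.leibniz_even hn, hDn, hDe, hDDb]
  linear_combination (norm := noncomm_ring) -a * S.even_comm hDb (𝒟.D a * 𝒟.D b - p ^ 2)
    + hab (𝒟.D (𝒟.D a)) * 𝒟.D b
    + hab (𝒟.D a * c) - hab (𝒟.D a * c) * (a * b) - 𝒟.D a * c * S.odd_mul_odd_mul_self_eq_zero ha hb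
    - hab (𝒟.D a) * b * (𝒟.D a * 𝒟.D b - p ^ 2)
    - 𝒟.D a * a * S.mul_self_eq_zero_of_mem_A1 hb * (𝒟.D a * 𝒟.D b - p ^ 2)

end OddDerivation

section cwise

variable {A F : Type*} [Ring A] [FunLike F A A] [AddMonoidHomClass F A A] (f : F)

theorem coeff_cwise (P : Polynomial A) (n : ℕ) : (cwise f P).coeff n = f (P.coeff n) := by
  simp only [cwise, Polynomial.sum_def, Polynomial.finsetSum_coeff, Polynomial.coeff_monomial,
    Finset.sum_ite_eq', Polynomial.mem_support_iff]
  split_ifs with h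
  · rfl
  · rw [Polynomial.notMem_support_iff.mp h, map_zero]

theorem E1gen_X_map_cwise (hf : f 1 = 0) (p a b da db : A) :
    (E1gen (X : Polynomial A) (C p) (C a) (C b) (C da) (C db)).map (cwise f) =
      !![C (f ((1 + a * b) * (da * db - p ^ 2))), -C (f da), X * C (f a);
        -C (f db), C (f (1 - a * b)), 0;
        -(X * C (f b)), 0, 0] := by
  have hu : (1 + C a * C b) * (C da * C db - C p ^ 2) = C ((1 + a * b) * (da * db - p ^ 2)) := by
    simp
  rw [E1gen, hu]
  generalize (1 + a * b) * (da * db - p ^ 2) = u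
  ext i j n
  fin_cases i <;> fin_cases j <;>
    simp [coeff_cwise, coeff_X, coeff_C, coeff_one] <;> split_ifs <;> simp [hf]

end cwise

theorem darboux_condition_E1gen {R : Type*} [Ring R] {t p a b c a₁ da db ax bx Du Dw : R}
    (ht : ∀ x, Commute t x)
    (h₁₁ : Du = da * c - a₁ * db)
    (h₁₂ : a₁ * (1 - a * b) = (1 + a * b) * (da * db - p ^ 2) * a - ax)
    (h₂₁ : bx = (1 - a * b) * c - b * ((1 + a * b) * (da * db - p ^ 2)))
    (h₂₂ : Dw = db * a - b * da)
    (hab : a * b = -(b * a)) :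
    !![Du, -ax, t * da; -bx, Dw, 0; -(t * db), 0, 0]
      + sdag (E1gen t p a b da db) * Lgen t a c - Lgen t a₁ b * E1gen t p a b da db = 0 := by
  ext i j
  fin_cases i <;> fin_cases j <;>
    simp [E1gen, Lgen, sdag, Matrix.mul_apply, Fin.sum_univ_three]
  · linear_combination (norm := noncomm_ring) h₁₁
  · linear_combination (norm := noncomm_ring) -h₁₂ + t * (ht a).eq
  · linear_combination (norm := noncomm_ring) (ht da).eq
  · linear_combination (norm := noncomm_ring) -h₂₁ + t * (ht b).eq + (ht b).eq * t
  · linear_combination (norm := noncomm_ring) h₂₂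
  · linear_combination (norm := noncomm_ring) -hab * t - b * (ht a).eq
  · linear_combination (norm := noncomm_ring) t * hab

theorem eDT1_is_darboux_general {A : Type*} [Ring A] [Algebra ℂ A]
    (S : SuperAlgebra A) (𝒟 : OddDerivation S)
    (α β : A) (hα : α ∈ S.A1)
    (p₁ p1inv : A) (hp₁ : p₁ ∈ S.A0) (hDp₁ : 𝒟.D p₁ = 0)
    (hp1inv : p₁ * p1inv = 1 ∧ p1inv * p₁ = 1)
    (f₁ g₁ σ₁ : A) (hf₁ : f₁ ∈ S.A0) (hg₁ : g₁ ∈ S.A0) (hσ₁ : σ₁ ∈ S.A1)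
    (f1inv : A) (hf1inv : f₁ * f1inv = 1 ∧ f1inv * f₁ = 1)
    (hDf₁ : 𝒟.D f₁ = α * g₁) (hDg₁ : 𝒟.D g₁ = β * f₁ + p₁ * σ₁) (hDσ₁ : 𝒟.D σ₁ = p₁ * g₁)
    (y₁ Ω₁ β₁ α₁ : A) (hy₁ : y₁ = g₁ * f1inv) (hΩ₁ : Ω₁ = σ₁ * f1inv)
    (hβ₁ : β₁ = p1inv * Ω₁)
    (hα₁ : α₁ = -(𝒟.D (𝒟.D α)) * (1 + α * β₁) + α * ((𝒟.D α) * (𝒟.D β₁) - p₁ ^ 2)) :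
    (𝒟.D (𝒟.D β₁) = β * (1 - α * β₁) - β₁ * ((𝒟.D α) * (𝒟.D β₁) - p₁ ^ 2))
      ∧ ((E1poly (fun x => 𝒟.D x) p₁ α β₁).map (cwise fun x => 𝒟.D x)
          + sdag (E1poly (fun x => 𝒟.D x) p₁ α β₁) * Lpoly α β
          - Lpoly α₁ β₁ * E1poly (fun x => 𝒟.D x) p₁ α β₁ = 0) := by
  obtain ⟨hppinv, hpinvp⟩ := hp1inv
  obtain ⟨hffinv, hfinvf⟩ := hf1inv
  rw [hΩ₁] at hβ₁
  have hpinv : p1inv ∈ S.A0 := S.mem_A0_of_mul_eq_one hp₁ hppinv hpinvp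
  have hβ₁odd : β₁ ∈ S.A1 :=
    hβ₁ ▸ S.mul_mem01 hpinv (S.mul_mem10 hσ₁ (S.mem_A0_of_mul_eq_one hf₁ hffinv hfinvf))
  have hDpinv : 𝒟.D p1inv = 0 := by simp [𝒟.map_inv_of_mul_eq_one hp₁ hppinv hpinvp, hDp₁]
  have hDfinv : 𝒟.D f1inv = -(f1inv * (α * g₁) * f1inv) :=
    hDf₁ ▸ 𝒟.map_inv_of_mul_eq_one hf₁ hffinv hfinvf
  have hback := 𝒟.map_map_β₁_of_riccati hα hβ₁odd hp₁
    (𝒟.map_β₁_of_linearProblem hσ₁ hpinv hDpinv hpinvp hDσ₁ hDfinv hy₁ hβ₁)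
    (𝒟.map_y_of_linearProblem hg₁ hppinv hffinv hDg₁ hDfinv hy₁ hβ₁)
  refine ⟨hback, ?_⟩
  have toC {x y : A} (h : x = y) : (C x : A[X]) = C y := congrArg C h
  simp only [E1poly, Lpoly]
  rw [E1gen_X_map_cwise 𝒟.D 𝒟.map_one]
  refine darboux_condition_E1gen commute_X ?_ ?_ ?_ ?_ ?_
  · simpa only [C_mul, C_sub, ← hα₁] using toC (𝒟.darboux_entry₁₁ hα hβ₁odd hp₁ hDp₁ hback)
  · simpa only [C_mul, C_sub, C_add, C_neg, C_1, C_pow, ← hα₁] using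
      toC (S.darboux_entry₁₂ (x := 𝒟.D (𝒟.D α)) hα hβ₁odd
        (𝒟.map_mul_map_sub_sq_mem_A0 hα hβ₁odd hp₁))
  · simpa only [C_mul, C_sub, C_add, C_1, C_pow] using
      toC (hback.trans (S.darboux_entry₂₁ hα hβ₁odd).symm)
  · simpa only [C_mul, C_sub] using toC (𝒟.darboux_entry₂₂ hα hβ₁odd)
  · simpa only [C_mul, C_neg] using toC (S.odd_anticomm hα hβ₁odd)

/-- **Proposition 1, eDT-I part.** With `β₁ = p₁⁻¹Ω₁` and
`α₁ = −α_x(1 + αβ₁) + α((Dα)(Dβ₁) − p₁²)` built from a solution of the linear problem at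
`λ = p₁`, the second Bäcklund relation `β₁,ₓ = β(1 − αβ₁) − β₁((Dα)(Dβ₁) − p₁²)` holds
automatically, and `W₁ = E₁(λ, p₁; α, β₁)` satisfies the Darboux covariance condition
`(DW₁) + W₁†·L(λ; α, β) − L(λ; α₁, β₁)·W₁ = 0` identically in `λ`. -/
theorem eDT1_is_darboux {A : Type*} [Ring A] [Algebra ℂ A]
    (S : SuperAlgebra A) (𝒟 : OddDerivation S)
    (α β : A) (hα : α ∈ S.A1) (hβ : β ∈ S.A1)
    (p₁ p1inv : A) (hp₁ : p₁ ∈ S.A0) (hDp₁ : 𝒟.D p₁ = 0)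
    (hp1inv : p₁ * p1inv = 1 ∧ p1inv * p₁ = 1)
    (f₁ g₁ σ₁ : A) (hf₁ : f₁ ∈ S.A0) (hg₁ : g₁ ∈ S.A0) (hσ₁ : σ₁ ∈ S.A1)
    (f1inv : A) (hf1inv : f₁ * f1inv = 1 ∧ f1inv * f₁ = 1)
    (hDf₁ : 𝒟.D f₁ = α * g₁) (hDg₁ : 𝒟.D g₁ = β * f₁ + p₁ * σ₁) (hDσ₁ : 𝒟.D σ₁ = p₁ * g₁)
    (y₁ Ω₁ β₁ α₁ : A) (hy₁ : y₁ = g₁ * f1inv) (hΩ₁ : Ω₁ = σ₁ * f1inv)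
    (hβ₁ : β₁ = p1inv * Ω₁)
    (hα₁ : α₁ = -(𝒟.D (𝒟.D α)) * (1 + α * β₁) + α * ((𝒟.D α) * (𝒟.D β₁) - p₁ ^ 2)) :
    (𝒟.D (𝒟.D β₁) = β * (1 - α * β₁) - β₁ * ((𝒟.D α) * (𝒟.D β₁) - p₁ ^ 2))
      ∧ ((E1poly (fun x => 𝒟.D x) p₁ α β₁).map (cwise fun x => 𝒟.D x)
          + sdag (E1poly (fun x => 𝒟.D x) p₁ α β₁) * Lpoly α β
          - Lpoly α₁ β₁ * E1poly (fun x => 𝒟.D x) p₁ α β₁ = 0) :=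
  eDT1_is_darboux_general S 𝒟 α β hα p₁ p1inv hp₁ hDp₁ hp1inv f₁ g₁ σ₁ hf₁ hg₁ hσ₁ f1inv hf1inv hDf₁
    hDg₁ hDσ₁ y₁ Ω₁ β₁ α₁ hy₁ hΩ₁ hβ₁ hα₁
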